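/- Discrete setting. Let T^h : X → X be linear with T^h 1 ≠ 0, g^h ∈ X, α : Ω^h → (0,∞), and let δ > ‖T^h‖², where ‖T^h‖ is the operator norm of T^h with respect to ‖·‖₂. Define z(a) := a − (1/δ)(T^h)ᵀ(T^h a − g^h) and the surrogate functional S(u,a) := (1/2)‖T^h u − g^h‖₂² + R_α(u) + (δ/2)‖u − a‖₂² − (1/2)‖T^h(u − a)‖₂². Then for every u₀ ∈ X, the map u ↦ S(u, a) has a unique minimizer for each a ∈ X, and the iteration u_{n+1} := argmin_{u ∈ X} S(u, u_n) generates a sequence (u_n) that converges to a minimizer of J₂(u,α) = (1/2)‖T^h u − g^h‖₂² + R_α(u) over X. -/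

import Mathlib

/-! Completing the square in `u`, `S(u, a)` equals `(δ/2)‖u - z(a)‖² + R_α(u)` up to a term
depending only on `a`, so the iteration is `u_{n+1} = P(u_n)` with `P = prox ∘ z`, where `prox`
minimizes `(δ/2)‖· - z‖² + R_α`. Both factors are nonexpansive: `prox` by the quadratic growth of
this strongly convex functional at its minimizer, `z` because `δ ≥ ‖T‖²`. Since
`S(u, a) ≥ J₂(u) + ((δ - ‖T‖²)/2)‖u - a‖²` and `S(a, a) = J₂(a)`, the energies `J₂(u_n)` decrease
and the steps `‖u_{n+1} - u_n‖²` are summable, while `T 1 ≠ 0` makes `J₂` coercive, so the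
iterates are bounded. A cluster point is then a fixed point of `P`, hence a minimizer of `J₂`,
and the Fejér monotonicity of `‖u_n - ū‖` upgrades subsequential to full convergence. -/

open scoped BigOperators

noncomputable section

/-- The discrete image space `X = ℝ^{N₁×N₂}` with the `ℓ²` norm. -/
abbrev Xg (N₁ N₂ : ℕ) : Type := EuclideanSpace ℝ (Fin N₁ × Fin N₂)

/-- Discrete gradient by forward differences (zero at the right/bottom boundary). -/
def gradh {N₁ N₂ : ℕ} (u : Xg N₁ N₂) (x : Fin N₁ × Fin N₂) : ℝ × ℝ :=
  (if h : (x.1 : ℕ) + 1 < N₁ then u (⟨(x.1 : ℕ) + 1, h⟩, x.2) - u x else 0,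
   if h : (x.2 : ℕ) + 1 < N₂ then u (x.1, ⟨(x.2 : ℕ) + 1, h⟩) - u x else 0)

/-- Weighted discrete total variation `R_α(u) = Σ_x α(x)|∇^h u(x)|_{ℓ²}`. -/
def Ralpha {N₁ N₂ : ℕ} (α : Fin N₁ × Fin N₂ → ℝ) (u : Xg N₁ N₂) : ℝ :=
  ∑ x : Fin N₁ × Fin N₂,
    α x * Real.sqrt ((gradh u x).1 ^ 2 + (gradh u x).2 ^ 2)

/-- The `ℓ¹` norm on `X`. -/
def l1norm {N₁ N₂ : ℕ} (u : Xg N₁ N₂) : ℝ :=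
  ∑ x : Fin N₁ × Fin N₂, |u x|

/-- The surrogate functional
`S(u,a) = (1/2)‖Tu-g‖₂² + R_α(u) + (δ/2)‖u-a‖₂² - (1/2)‖T(u-a)‖₂²`. -/
def Sur {N₁ N₂ : ℕ} (T : Xg N₁ N₂ →L[ℝ] Xg N₁ N₂) (g : Xg N₁ N₂)
    (α : Fin N₁ × Fin N₂ → ℝ) (δ : ℝ) (u a : Xg N₁ N₂) : ℝ :=
  (1 / 2) * ‖T u - g‖ ^ 2 + Ralpha α u + (δ / 2) * ‖u - a‖ ^ 2
    - (1 / 2) * ‖T (u - a)‖ ^ 2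

open Set Filter Topology Metric
open scoped RealInnerProductSpace InnerProduct

section ProxObjective

variable {E : Type*} [NormedAddCommGroup E]

def proxObjective (φ : E → ℝ) (δ : ℝ) (z u : E) : ℝ := δ / 2 * ‖u - z‖ ^ 2 + φ u

variable {φ : E → ℝ} {δ : ℝ}

theorem exists_forall_proxObjective_le [ProperSpace E] (hφ : Continuous φ) (hφ0 : ∀ u, 0 ≤ φ u)
    (hδ : 0 < δ) (z : E) : ∃ m, ∀ u, proxObjective φ δ z m ≤ proxObjective φ δ z u := by
  have hcont : Continuous (proxObjective φ δ z) :=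
    ((continuous_id.sub continuous_const).norm.pow 2).const_mul _ |>.add hφ
  refine hcont.exists_forall_le ?_
  have hlin : ∀ u : E, δ / 2 * (‖u‖ + -(‖z‖ + 1)) ≤ proxObjective φ δ z u := fun u => by
    have := norm_sub_norm_le u z
    have := hφ0 u
    unfold proxObjective
    nlinarith [sq_nonneg (‖u - z‖ - 1)]
  exact tendsto_atTop_mono hlin <|
    (tendsto_atTop_add_const_right _ _ tendsto_norm_cocompact_atTop).const_mul_atTop (by positivity)

variable [InnerProductSpace ℝ E] {z z' m m' : E}

theorem mul_inner_add_sub_nonneg_of_forall_proxObjective_le (hφ : ConvexOn ℝ univ φ)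
    (hm : ∀ u, proxObjective φ δ z m ≤ proxObjective φ δ z u) (u : E) :
    0 ≤ δ * ⟪m - z, u - m⟫ + (φ u - φ m) := by
  -- compare `m` with `(1 - t) • m + t • u`, divide by `t`, and let `t → 0⁺`
  have hsmall : ∀ t ∈ Ioc (0 : ℝ) 1,
      0 ≤ δ * ⟪m - z, u - m⟫ + (φ u - φ m) + t * (δ / 2 * ‖u - m‖ ^ 2) := by
    rintro t ⟨ht0, ht1⟩
    have hconv : φ ((1 - t) • m + t • u) ≤ (1 - t) * φ m + t * φ u :=
      hφ.2 (mem_univ m) (mem_univ u) (by linarith) ht0.le (by ring)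
    have hcomb : (1 - t) • m + t • u - z = (m - z) + t • (u - m) := by module
    have := hm ((1 - t) • m + t • u)
    simp only [proxObjective, hcomb, norm_add_sq_real, norm_smul, real_inner_smul_right,
      Real.norm_eq_abs, abs_of_pos ht0] at this
    nlinarith
  refine ge_of_tendsto ?_ (eventually_of_mem (Ioc_mem_nhdsGT one_pos) hsmall)
  refine tendsto_nhdsWithin_of_tendsto_nhds ?_
  simpa using ((continuous_id.mul continuous_const).const_add _).tendsto (0 : ℝ)

theorem proxObjective_add_sq_le (hφ : ConvexOn ℝ univ φ)
    (hm : ∀ u, proxObjective φ δ z m ≤ proxObjective φ δ z u) (u : E) :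
    proxObjective φ δ z m + δ / 2 * ‖u - m‖ ^ 2 ≤ proxObjective φ δ z u := by
  have hvar := mul_inner_add_sub_nonneg_of_forall_proxObjective_le hφ hm u
  have hsplit : u - z = (m - z) + (u - m) := by abel
  simp only [proxObjective, hsplit, norm_add_sq_real]
  linarith

theorem eq_of_forall_proxObjective_le (hφ : ConvexOn ℝ univ φ) (hδ : 0 < δ)
    (hm : ∀ u, proxObjective φ δ z m ≤ proxObjective φ δ z u)
    (hm' : ∀ u, proxObjective φ δ z m' ≤ proxObjective φ δ z u) : m' = m := by
  have h := proxObjective_add_sq_le hφ hm m'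
  have hsq : ‖m' - m‖ ^ 2 ≤ 0 := by nlinarith [hm' m]
  exact sub_eq_zero.mp <| norm_eq_zero.mp <|
    (pow_eq_zero_iff two_ne_zero).mp (le_antisymm hsq (sq_nonneg _))

theorem norm_sub_le_of_forall_proxObjective_le (hφ : ConvexOn ℝ univ φ) (hδ : 0 < δ)
    (hm : ∀ u, proxObjective φ δ z m ≤ proxObjective φ δ z u)
    (hm' : ∀ u, proxObjective φ δ z' m' ≤ proxObjective φ δ z' u) : ‖m - m'‖ ≤ ‖z - z'‖ := by
  have h := proxObjective_add_sq_le hφ hm m'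
  have h' := proxObjective_add_sq_le hφ hm' m
  have hfirm : ‖m - m'‖ ^ 2 ≤ ⟪m - m', z - z'⟫ := by
    simp only [proxObjective] at h h'
    have hsq : ‖m - z‖ ^ 2 + ‖m' - z'‖ ^ 2 - ‖m' - z‖ ^ 2 - ‖m - z'‖ ^ 2
        = -2 * ⟪m - m', z - z'⟫ := by
      simp only [norm_sub_sq_real, inner_sub_left, inner_sub_right, real_inner_comm]
      ring
    rw [norm_sub_rev m' m] at h
    nlinarith
  nlinarith [real_inner_le_norm (m - m') (z - z'), norm_nonneg (m - m'), norm_nonneg (z - z')]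

end ProxObjective

section Landweber

variable {E F : Type*} [NormedAddCommGroup E] [InnerProductSpace ℝ E] [CompleteSpace E]
  [NormedAddCommGroup F] [InnerProductSpace ℝ F] [CompleteSpace F]

def landweberStep (T : E →L[ℝ] F) (g : F) (δ : ℝ) (a : E) : E :=
  a - δ⁻¹ • (T†) (T a - g)

theorem half_norm_sq_add_sub_eq_norm_sub_landweberStep (T : E →L[ℝ] F) (g : F) {δ : ℝ}
    (hδ : δ ≠ 0) (u a : E) :
    1 / 2 * ‖T u - g‖ ^ 2 + δ / 2 * ‖u - a‖ ^ 2 - 1 / 2 * ‖T (u - a)‖ ^ 2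
      = δ / 2 * ‖u - landweberStep T g δ a‖ ^ 2
        + (1 / 2 * ‖T a - g‖ ^ 2 - 1 / (2 * δ) * ‖(T†) (T a - g)‖ ^ 2) := by
  set r := T a - g
  have hres : T u - g = T (u - a) + r := by simp only [r, map_sub]; abel
  have hstep : u - landweberStep T g δ a = (u - a) + δ⁻¹ • (T†) r := by
    simp only [landweberStep, r]; abel
  rw [hres, hstep, norm_add_sq_real, norm_add_sq_real, real_inner_smul_right,
    ContinuousLinearMap.adjoint_inner_right, norm_smul, Real.norm_eq_abs, mul_pow, sq_abs]
  field_simp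
  ring

theorem norm_landweberStep_sub_le (T : E →L[ℝ] F) (g : F) {δ : ℝ} (hδ : ‖T‖ ^ 2 ≤ δ)
    (hδ0 : 0 < δ) (a b : E) :
    ‖landweberStep T g δ a - landweberStep T g δ b‖ ≤ ‖a - b‖ := by
  set v := a - b
  have hdiff : landweberStep T g δ a - landweberStep T g δ b = v - δ⁻¹ • (T†) (T v) := by
    simp only [landweberStep, v, map_sub]; module
  have hinner : ⟪v, (T†) (T v)⟫ = ‖T v‖ ^ 2 := by
    rw [ContinuousLinearMap.adjoint_inner_right, real_inner_self_eq_norm_sq]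
  have hadj : ‖(T†) (T v)‖ ≤ ‖T‖ * ‖T v‖ := by simpa using (T†).le_opNorm (T v)
  have hsq : δ⁻¹ ^ 2 * ‖(T†) (T v)‖ ^ 2 ≤ δ⁻¹ * ‖T v‖ ^ 2 :=
    calc δ⁻¹ ^ 2 * ‖(T†) (T v)‖ ^ 2 ≤ δ⁻¹ ^ 2 * (‖T‖ * ‖T v‖) ^ 2 := by gcongr
      _ ≤ δ⁻¹ ^ 2 * (δ * ‖T v‖ ^ 2) := by rw [mul_pow]; gcongr
      _ = δ⁻¹ * ‖T v‖ ^ 2 := by field_simp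
  rw [← pow_le_pow_iff_left₀ (norm_nonneg _) (norm_nonneg _) two_ne_zero, hdiff,
    norm_sub_sq_real, real_inner_smul_right, hinner, norm_smul, Real.norm_eq_abs, mul_pow, sq_abs]
  linarith [mul_nonneg (inv_nonneg.2 hδ0.le) (sq_nonneg ‖T v‖)]

end Landweber

theorem exists_isFixedPt_tendsto_of_lipschitzWith_one {X : Type*} [MetricSpace X] [ProperSpace X]
    {P : X → X} (hP : LipschitzWith 1 P) {u : ℕ → X} (hu : ∀ n, u (n + 1) = P (u n))
    (hbdd : Bornology.IsBounded (range u))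
    (hreg : Tendsto (fun n => dist (u n) (u (n + 1))) atTop (𝓝 0)) :
    ∃ w, Function.IsFixedPt P w ∧ Tendsto u atTop (𝓝 w) := by
  obtain ⟨w, -, ψ, hψ, hlim⟩ := tendsto_subseq_of_bounded hbdd (mem_range_self ·)
  have hlim_succ : Tendsto (fun k => u (ψ k + 1)) atTop (𝓝 w) :=
    hlim.congr_dist (hreg.comp hψ.tendsto_atTop)
  have hfix : Function.IsFixedPt P w := by
    refine tendsto_nhds_unique ((hP.continuous.tendsto w).comp hlim) ?_
    simpa only [Function.comp_def, ← hu] using hlim_succ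
  have hfejer : Antitone fun n => dist (u n) w := antitone_nat_of_succ_le fun n => by
    simpa [hu, hfix.eq] using hP.dist_le_mul (u n) w
  have hinf := tendsto_atTop_ciInf hfejer ⟨0, forall_mem_range.2 fun _ => dist_nonneg⟩
  have hinf0 :=
    tendsto_nhds_unique (hinf.comp hψ.tendsto_atTop) (tendsto_iff_dist_tendsto_zero.1 hlim)
  exact ⟨w, hfix, tendsto_iff_dist_tendsto_zero.2 (hinf0 ▸ hinf)⟩

theorem tendsto_zero_of_add_le {a d : ℕ → ℝ} (ha : ∀ n, 0 ≤ a n) (hd : ∀ n, 0 ≤ d n)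
    (h : ∀ n, a (n + 1) + d n ≤ a n) : Tendsto d atTop (𝓝 0) := by
  have hsum : ∀ n, ∑ i ∈ Finset.range n, d i ≤ a 0 - a n := by
    intro n
    induction n with
    | zero => simp
    | succ n ih => rw [Finset.sum_range_succ]; linarith [h n]
  refine (summable_of_sum_range_le (c := a 0) hd fun n => ?_).tendsto_atTop_zero
  linarith [hsum n, ha n]

theorem exists_pos_mul_norm_le_of_homogeneous {E : Type*} [NormedAddCommGroup E]
    [NormedSpace ℝ E] [ProperSpace E] [Nontrivial E] {q : E → ℝ} (hq : Continuous q)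
    (hsmul : ∀ (c : ℝ) u, 0 ≤ c → q (c • u) = c * q u) (hpos : ∀ u ≠ 0, 0 < q u) :
    ∃ ε > 0, ∀ u, ε * ‖u‖ ≤ q u := by
  obtain ⟨e, he⟩ := exists_norm_eq E zero_le_one
  obtain ⟨m, hm, hmin⟩ := (isCompact_sphere (0 : E) 1).exists_isMinOn
    ⟨e, mem_sphere_zero_iff_norm.2 he⟩ hq.continuousOn
  have hm0 : m ≠ 0 := ne_zero_of_mem_unit_sphere ⟨m, hm⟩
  refine ⟨q m, hpos m hm0, fun u => ?_⟩
  rcases eq_or_ne u 0 with rfl | hu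
  · simpa using (hsmul 0 0 le_rfl).ge
  have hunit : ‖u‖⁻¹ • u ∈ sphere (0 : E) 1 := by
    rw [mem_sphere_zero_iff_norm, norm_smul, norm_inv, norm_norm,
      inv_mul_cancel₀ (norm_ne_zero_iff.2 hu)]
  calc q m * ‖u‖ ≤ q (‖u‖⁻¹ • u) * ‖u‖ := by gcongr; exact hmin hunit
    _ = q u := by
      rw [mul_comm, ← hsmul _ _ (norm_nonneg u), smul_inv_smul₀ (norm_ne_zero_iff.2 hu)]

section TotalVariation

variable {N₁ N₂ : ℕ}

-- Valued in `WithLp 2 (ℝ × ℝ)` because the norm of `ℝ × ℝ` is the sup norm, not `|·|_{ℓ²}`.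
def gradhL (x : Fin N₁ × Fin N₂) : Xg N₁ N₂ →ₗ[ℝ] WithLp 2 (ℝ × ℝ) where
  toFun u := WithLp.toLp 2 (gradh u x)
  map_add' u v := by
    rw [← WithLp.toLp_add]
    congr 1
    ext <;> simp only [gradh, Prod.fst_add, Prod.snd_add] <;> split_ifs <;> simp <;> ring
  map_smul' c u := by
    rw [RingHom.id_apply, ← WithLp.toLp_smul]
    congr 1
    ext <;> simp only [gradh, Prod.smul_fst, Prod.smul_snd] <;> split_ifs <;> simp <;> ring

theorem Ralpha_eq_sum_norm (α : Fin N₁ × Fin N₂ → ℝ) (u : Xg N₁ N₂) :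
    Ralpha α u = ∑ x, α x * ‖gradhL x u‖ := by
  simp [Ralpha, gradhL, WithLp.prod_norm_eq_of_L2]

theorem Ralpha_nonneg {α : Fin N₁ × Fin N₂ → ℝ} (hα : ∀ x, 0 ≤ α x) (u : Xg N₁ N₂) :
    0 ≤ Ralpha α u := by
  rw [Ralpha_eq_sum_norm]
  exact Finset.sum_nonneg fun x _ => mul_nonneg (hα x) (norm_nonneg _)

theorem Ralpha_smul (α : Fin N₁ × Fin N₂ → ℝ) (c : ℝ) (u : Xg N₁ N₂) :
    Ralpha α (c • u) = |c| * Ralpha α u := by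
  simp only [Ralpha_eq_sum_norm, map_smul, norm_smul, Real.norm_eq_abs, Finset.mul_sum]
  exact Finset.sum_congr rfl fun x _ => by ring

theorem continuous_Ralpha (α : Fin N₁ × Fin N₂ → ℝ) : Continuous (Ralpha α) := by
  simp only [funext (Ralpha_eq_sum_norm α)]
  exact continuous_finsetSum _ fun x _ =>
    continuous_const.mul (gradhL x).continuous_of_finiteDimensional.norm

theorem convexOn_Ralpha {α : Fin N₁ × Fin N₂ → ℝ} (hα : ∀ x, 0 ≤ α x) :
    ConvexOn ℝ univ (Ralpha α) := by
  refine ⟨convex_univ, fun u _ v _ a b ha hb hab => ?_⟩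
  simp only [Ralpha_eq_sum_norm, Finset.mul_sum, ← Finset.sum_add_distrib, smul_eq_mul]
  refine Finset.sum_le_sum fun x _ => ?_
  have h := (convexOn_norm convex_univ).2 (mem_univ (gradhL x u)) (mem_univ (gradhL x v)) ha hb hab
  simp only [smul_eq_mul] at h
  rw [map_add, map_smul, map_smul]
  nlinarith [mul_le_mul_of_nonneg_left h (hα x)]

theorem gradh_eq_zero_of_Ralpha_eq_zero {α : Fin N₁ × Fin N₂ → ℝ} (hα : ∀ x, 0 < α x)
    {u : Xg N₁ N₂} (hu : Ralpha α u = 0) (x : Fin N₁ × Fin N₂) : gradh u x = 0 := by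
  rw [Ralpha_eq_sum_norm, Finset.sum_eq_zero_iff_of_nonneg
    fun x _ => mul_nonneg (hα x).le (norm_nonneg _)] at hu
  simpa [(hα x).ne', gradhL] using hu x (Finset.mem_univ x)

theorem apply_eq_of_gradh_eq_zero {u : Xg N₁ N₂} (hu : ∀ x, gradh u x = 0)
    (p q : Fin N₁ × Fin N₂) : u p = u q := by
  have hfst : ∀ (i : ℕ) (hi : i < N₁) j, u (⟨i, hi⟩, j) = u (⟨0, by omega⟩, j) := by
    intro i
    induction i with
    | zero => intro _ _; rfl
    | succ i ih =>
      intro hi j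
      have h := congrArg Prod.fst (hu (⟨i, by omega⟩, j))
      simp only [gradh, dif_pos hi, Prod.fst_zero] at h
      rw [← ih (by omega) j]
      linarith
  have hsnd : ∀ (j : ℕ) (hj : j < N₂) (i : Fin N₁), u (i, ⟨j, hj⟩) = u (i, ⟨0, by omega⟩) := by
    intro j
    induction j with
    | zero => intro _ _; rfl
    | succ j ih =>
      intro hj i
      have h := congrArg Prod.snd (hu (i, ⟨j, by omega⟩))
      simp only [gradh, dif_pos hj, Prod.snd_zero] at h
      rw [← ih (by omega) i]
      linarith
  have hbase : ∀ p : Fin N₁ × Fin N₂, u p = u (⟨0, p.1.pos⟩, ⟨0, p.2.pos⟩) := by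
    rintro ⟨⟨i, hi⟩, ⟨j, hj⟩⟩
    rw [hsnd j hj, hfst i hi]
  rw [hbase p, hbase q]

theorem eq_smul_of_Ralpha_eq_zero {one : Xg N₁ N₂} (hone : ∀ x, one x = 1)
    {α : Fin N₁ × Fin N₂ → ℝ} (hα : ∀ x, 0 < α x) {u : Xg N₁ N₂} (hu : Ralpha α u = 0)
    (p : Fin N₁ × Fin N₂) : u = u p • one := by
  ext q
  simp [hone q, apply_eq_of_gradh_eq_zero (gradh_eq_zero_of_Ralpha_eq_zero hα hu) q p]

end TotalVariation

section Surrogate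

variable {N₁ N₂ : ℕ} {T : Xg N₁ N₂ →L[ℝ] Xg N₁ N₂} {g : Xg N₁ N₂} {α : Fin N₁ × Fin N₂ → ℝ}
  {δ : ℝ}

def tvEnergy (T : Xg N₁ N₂ →L[ℝ] Xg N₁ N₂) (g : Xg N₁ N₂) (α : Fin N₁ × Fin N₂ → ℝ)
    (u : Xg N₁ N₂) : ℝ :=
  1 / 2 * ‖T u - g‖ ^ 2 + Ralpha α u

theorem exists_pos_mul_norm_le_norm_add_Ralpha {one : Xg N₁ N₂} (hone : ∀ x, one x = 1)
    (hT1 : T one ≠ 0) (hα : ∀ x, 0 < α x) :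
    ∃ ε > 0, ∀ u, ε * ‖u‖ ≤ ‖T u‖ + Ralpha α u := by
  have : Nontrivial (Xg N₁ N₂) := ⟨⟨one, 0, fun h => hT1 (by simp [h])⟩⟩
  refine exists_pos_mul_norm_le_of_homogeneous (T.continuous.norm.add (continuous_Ralpha α))
    (fun c u hc => by rw [map_smul, norm_smul, Ralpha_smul, Real.norm_eq_abs, abs_of_nonneg hc,
      mul_add]) fun u hu => ?_
  rcases (Ralpha_nonneg (fun x => (hα x).le) u).lt_or_eq with hR | hR
  · exact add_pos_of_nonneg_of_pos (norm_nonneg _) hR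
  obtain ⟨p, hp⟩ : ∃ p, u p ≠ 0 := by
    by_contra! h
    exact hu (by ext p; simp [h p])
  have hTu : T u ≠ 0 := by
    rw [eq_smul_of_Ralpha_eq_zero hone hα hR.symm p, map_smul]
    exact smul_ne_zero hp hT1
  rw [← hR, add_zero]
  exact norm_pos_iff.2 hTu

theorem isBounded_setOf_tvEnergy_le {one : Xg N₁ N₂} (hone : ∀ x, one x = 1) (hT1 : T one ≠ 0)
    (hα : ∀ x, 0 < α x) (M : ℝ) : Bornology.IsBounded {u | tvEnergy T g α u ≤ M} := by
  obtain ⟨ε, hε, hcoer⟩ := exists_pos_mul_norm_le_norm_add_Ralpha hone hT1 hα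
  refine (isBounded_closedBall (x := 0) (r := (M + ‖g‖ + 1 / 2) / ε)).subset fun u hu => ?_
  rw [mem_closedBall_zero_iff, le_div_iff₀ hε, mul_comm]
  have := hcoer u
  have := norm_sub_norm_le (T u) g
  simp only [tvEnergy, mem_ofPred_eq] at hu
  nlinarith [sq_nonneg (‖T u - g‖ - 1)]

theorem Sur_eq_proxObjective_add (hδ : δ ≠ 0) (u a : Xg N₁ N₂) :
    Sur T g α δ u a = proxObjective (Ralpha α) δ (landweberStep T g δ a) u
      + (1 / 2 * ‖T a - g‖ ^ 2 - 1 / (2 * δ) * ‖(T†) (T a - g)‖ ^ 2) := by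
  have := half_norm_sq_add_sub_eq_norm_sub_landweberStep T g hδ u a
  simp only [Sur, proxObjective]
  linarith

theorem forall_Sur_le_iff (hδ : δ ≠ 0) {a m : Xg N₁ N₂} :
    (∀ u, Sur T g α δ m a ≤ Sur T g α δ u a) ↔
      ∀ u, proxObjective (Ralpha α) δ (landweberStep T g δ a) m
        ≤ proxObjective (Ralpha α) δ (landweberStep T g δ a) u := by
  simp only [Sur_eq_proxObjective_add hδ, add_le_add_iff_right]

theorem existsUnique_forall_Sur_le (hα : ∀ x, 0 ≤ α x) (hδ : 0 < δ) (a : Xg N₁ N₂) :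
    ∃! m, ∀ u, Sur T g α δ m a ≤ Sur T g α δ u a := by
  simp only [forall_Sur_le_iff hδ.ne']
  obtain ⟨m, hm⟩ := exists_forall_proxObjective_le (continuous_Ralpha α) (Ralpha_nonneg hα) hδ
    (landweberStep T g δ a)
  exact ⟨m, hm, fun m' hm' => eq_of_forall_proxObjective_le (convexOn_Ralpha hα) hδ hm hm'⟩

theorem norm_sub_le_of_forall_Sur_le (hα : ∀ x, 0 ≤ α x) (hT : ‖T‖ ^ 2 ≤ δ) (hδ : 0 < δ)
    {a a' m m' : Xg N₁ N₂} (hm : ∀ u, Sur T g α δ m a ≤ Sur T g α δ u a)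
    (hm' : ∀ u, Sur T g α δ m' a' ≤ Sur T g α δ u a') : ‖m - m'‖ ≤ ‖a - a'‖ :=
  (norm_sub_le_of_forall_proxObjective_le (convexOn_Ralpha hα) hδ
    ((forall_Sur_le_iff hδ.ne').1 hm) ((forall_Sur_le_iff hδ.ne').1 hm')).trans
    (norm_landweberStep_sub_le T g hT hδ a a')

theorem tvEnergy_add_le_Sur (u a : Xg N₁ N₂) :
    tvEnergy T g α u + (δ - ‖T‖ ^ 2) / 2 * ‖u - a‖ ^ 2 ≤ Sur T g α δ u a := by
  have := T.le_opNorm (u - a)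
  simp only [Sur, tvEnergy]
  nlinarith [norm_nonneg (T (u - a)), mul_nonneg (norm_nonneg T) (norm_nonneg (u - a))]

theorem tvEnergy_add_le_of_forall_Sur_le {a m : Xg N₁ N₂}
    (hm : ∀ u, Sur T g α δ m a ≤ Sur T g α δ u a) :
    tvEnergy T g α m + (δ - ‖T‖ ^ 2) / 2 * ‖m - a‖ ^ 2 ≤ tvEnergy T g α a :=
  (tvEnergy_add_le_Sur m a).trans ((hm a).trans_eq (by simp [Sur, tvEnergy]))

theorem tvEnergy_le_of_forall_Sur_le_self (hα : ∀ x, 0 ≤ α x) (hδ : δ ≠ 0) {w : Xg N₁ N₂}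
    (hw : ∀ u, Sur T g α δ w w ≤ Sur T g α δ u w) (u : Xg N₁ N₂) :
    tvEnergy T g α w ≤ tvEnergy T g α u := by
  have h := proxObjective_add_sq_le (convexOn_Ralpha hα) ((forall_Sur_le_iff hδ).1 hw) u
  have hu := Sur_eq_proxObjective_add (T := T) (g := g) (α := α) hδ u w
  have hw := Sur_eq_proxObjective_add (T := T) (g := g) (α := α) hδ w w
  simp only [Sur, tvEnergy, sub_self, map_zero, norm_zero] at hu hw ⊢
  nlinarith [sq_nonneg ‖T (u - w)‖]

theorem tendsto_dist_succ_of_forall_Sur_le (hα : ∀ x, 0 ≤ α x) (hδ : ‖T‖ ^ 2 < δ)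
    {useq : ℕ → Xg N₁ N₂}
    (hrec : ∀ n u, Sur T g α δ (useq (n + 1)) (useq n) ≤ Sur T g α δ u (useq n)) :
    Tendsto (fun n => dist (useq n) (useq (n + 1))) atTop (𝓝 0) := by
  have hc : 0 < (δ - ‖T‖ ^ 2) / 2 := by linarith
  have hsq := tendsto_zero_of_add_le (a := fun n => tvEnergy T g α (useq n))
    (d := fun n => (δ - ‖T‖ ^ 2) / 2 * ‖useq (n + 1) - useq n‖ ^ 2)
    (fun n => add_nonneg (by positivity) (Ralpha_nonneg hα _)) (fun n => by positivity)
    fun n => tvEnergy_add_le_of_forall_Sur_le (hrec n)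
  have h2 := (hsq.const_mul ((δ - ‖T‖ ^ 2) / 2)⁻¹).sqrt
  simp only [← mul_assoc, inv_mul_cancel₀ hc.ne'] at h2
  simpa only [one_mul, mul_zero, Real.sqrt_zero,
    Real.sqrt_sq (norm_nonneg _), dist_eq_norm, norm_sub_rev] using h2

theorem exists_tendsto_forall_tvEnergy_le_of_forall_Sur_le {one : Xg N₁ N₂}
    (hone : ∀ x, one x = 1) (hT1 : T one ≠ 0) (hα : ∀ x, 0 < α x) (hδ : ‖T‖ ^ 2 < δ)
    {useq : ℕ → Xg N₁ N₂}
    (hrec : ∀ n u, Sur T g α δ (useq (n + 1)) (useq n) ≤ Sur T g α δ u (useq n)) :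
    ∃ ubar, Tendsto useq atTop (𝓝 ubar) ∧ ∀ u, tvEnergy T g α ubar ≤ tvEnergy T g α u := by
  have hα0 : ∀ x, 0 ≤ α x := fun x => (hα x).le
  have hδ0 : 0 < δ := (sq_nonneg ‖T‖).trans_lt hδ
  choose P hP using fun a => (existsUnique_forall_Sur_le (T := T) (g := g) hα0 hδ0 a).exists
  have hPlip : LipschitzWith 1 P := LipschitzWith.of_dist_le_mul fun a b => by
    simpa [dist_eq_norm] using norm_sub_le_of_forall_Sur_le hα0 hδ.le hδ0 (hP a) (hP b)
  have horbit : ∀ n, useq (n + 1) = P (useq n) := fun n =>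
    (existsUnique_forall_Sur_le hα0 hδ0 _).unique (hrec n) (hP _)
  have hanti : Antitone fun n => tvEnergy T g α (useq n) := antitone_nat_of_succ_le fun n => by
    have := tvEnergy_add_le_of_forall_Sur_le (hrec n)
    nlinarith [sq_nonneg ‖useq (n + 1) - useq n‖]
  have hbdd : Bornology.IsBounded (range useq) :=
    (isBounded_setOf_tvEnergy_le hone hT1 hα _).subset
      (range_subset_iff.2 fun n => hanti (Nat.zero_le n))
  obtain ⟨w, hw, hlim⟩ := exists_isFixedPt_tendsto_of_lipschitzWith_one hPlip horbit hbdd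
    (tendsto_dist_succ_of_forall_Sur_le hα0 hδ hrec)
  have hwmin : ∀ u, Sur T g α δ w w ≤ Sur T g α δ u w := by simpa only [hw.eq] using hP w
  exact ⟨w, hlim, tvEnergy_le_of_forall_Sur_le_self hα0 hδ0.ne' hwmin⟩

end Surrogate

theorem stmt13_general (N₁ N₂ : ℕ)
    (T : Xg N₁ N₂ →L[ℝ] Xg N₁ N₂)
    (one : Xg N₁ N₂) (hone : ∀ x, one x = 1) (hT1 : T one ≠ 0)
    (g : Xg N₁ N₂) (α : Fin N₁ × Fin N₂ → ℝ) (hα : ∀ x, 0 < α x)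
    (δ : ℝ) (hδ : ‖T‖ ^ 2 < δ) :
    (∀ a : Xg N₁ N₂, ∃! m : Xg N₁ N₂, ∀ u : Xg N₁ N₂, Sur T g α δ m a ≤ Sur T g α δ u a) ∧
    (∀ u₀ : Xg N₁ N₂, ∀ useq : ℕ → Xg N₁ N₂, useq 0 = u₀ →
      (∀ n, ∀ u : Xg N₁ N₂, Sur T g α δ (useq (n + 1)) (useq n) ≤ Sur T g α δ u (useq n)) →
      ∃ ubar : Xg N₁ N₂, Filter.Tendsto useq Filter.atTop (nhds ubar) ∧
        ∀ u : Xg N₁ N₂,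
          (1 / 2) * ‖T ubar - g‖ ^ 2 + Ralpha α ubar ≤
            (1 / 2) * ‖T u - g‖ ^ 2 + Ralpha α u) :=
  ⟨existsUnique_forall_Sur_le (fun x => (hα x).le) ((sq_nonneg ‖T‖).trans_lt hδ),
    fun _ _ _ hrec => exists_tendsto_forall_tvEnergy_le_of_forall_Sur_le hone hT1 hα hδ hrec⟩

/-- The surrogate functional has a unique minimizer in its first
argument, and the surrogate iteration converges to a minimizer of
`J₂(u,α) = (1/2)‖Tu-g‖₂² + R_α(u)`. -/
theorem stmt13 (N₁ N₂ : ℕ) (hN₁ : 1 ≤ N₁) (hN₂ : 1 ≤ N₂)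
    (T : Xg N₁ N₂ →L[ℝ] Xg N₁ N₂)
    (one : Xg N₁ N₂) (hone : ∀ x, one x = 1) (hT1 : T one ≠ 0)
    (g : Xg N₁ N₂) (α : Fin N₁ × Fin N₂ → ℝ) (hα : ∀ x, 0 < α x)
    (δ : ℝ) (hδ : ‖T‖ ^ 2 < δ) :
    (∀ a : Xg N₁ N₂, ∃! m : Xg N₁ N₂, ∀ u : Xg N₁ N₂, Sur T g α δ m a ≤ Sur T g α δ u a) ∧
    (∀ u₀ : Xg N₁ N₂, ∀ useq : ℕ → Xg N₁ N₂, useq 0 = u₀ →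
      (∀ n, ∀ u : Xg N₁ N₂, Sur T g α δ (useq (n + 1)) (useq n) ≤ Sur T g α δ u (useq n)) →
      ∃ ubar : Xg N₁ N₂, Filter.Tendsto useq Filter.atTop (nhds ubar) ∧
        ∀ u : Xg N₁ N₂,
          (1 / 2) * ‖T ubar - g‖ ^ 2 + Ralpha α ubar ≤
            (1 / 2) * ‖T u - g‖ ^ 2 + Ralpha α u) :=
  stmt13_general N₁ N₂ T one hone hT1 g α hα δ hδ

end
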